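/- A Kripke frame F = (W, R, R_D) validates the formula 4_D := ([≠]p ∧ p) → [≠][≠]p if and only if R_D ∘ R_D ⊆ R_D ∪ Id_W. -/
import Mathlib


inductive Formula : Type where
  | var : Nat → Formula
  | bot : Formula
  | imp : Formula → Formula → Formula
  | box : Formula → Formula
  | dbox : Formula → Formula

def Formula.neg (φ : Formula) : Formula := .imp φ .bot
def Formula.and (φ ψ : Formula) : Formula := .neg (.imp φ (.neg ψ))
def Formula.or (φ ψ : Formula) : Formula := .imp (.neg φ) ψ
def Formula.ddiam (φ : Formula) : Formula := .neg (.dbox (.neg φ))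

/-- AT0 := (p ∧ [≠]¬p ∧ ⟨≠⟩(q ∧ [≠]¬q)) → (□¬q ∨ ⟨≠⟩(q ∧ □¬p)), with p = var 0, q = var 1. -/
def AT0 : Formula :=
  .imp (.and (.and (.var 0) (.dbox (.neg (.var 0))))
             (.ddiam (.and (.var 1) (.dbox (.neg (.var 1))))))
       (.or (.box (.neg (.var 1))) (.ddiam (.and (.var 1) (.box (.neg (.var 0))))))

/-- Kripke semantics for the bimodal language: `□` via `R`, `[≠]` via `RD`. -/
def ksat {W : Type*} (R RD : W → W → Prop) (V : Nat → Set W) : W → Formula → Prop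
  | x, .var p => x ∈ V p
  | _, .bot => False
  | x, .imp φ ψ => ksat R RD V x φ → ksat R RD V x ψ
  | x, .box φ => ∀ y, R x y → ksat R RD V y φ
  | x, .dbox φ => ∀ y, RD x y → ksat R RD V y φ

/-- 4_D := ([≠]p ∧ p) → [≠][≠]p. -/
def FourD : Formula := .imp (.and (.dbox (.var 0)) (.var 0)) (.dbox (.dbox (.var 0)))

/-- A frame validates 4_D iff `RD ∘ RD ⊆ RD ∪ Id`. -/
theorem stmt4 {W : Type*} (R RD : W → W → Prop) :
    (∀ (V : Nat → Set W) (x : W), ksat R RD V x FourD) ↔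
      ∀ x y z : W, RD x y → RD y z → RD x z ∨ x = z := by
  constructor
  · intro h x y z hxy hyz
    have := h (fun _ => {w | RD x w ∨ x = w}) x
    simp only [FourD, Formula.and, Formula.neg, ksat] at this
    have h2 := this (fun h' => h' (fun w hw => Or.inl hw) (Or.inr rfl)) y hxy z hyz
    exact h2
  · intro h V x
    simp only [FourD, Formula.and, Formula.neg, ksat]
    intro hpre y hxy z hyz
    have hp : ∀ w, RD x w → w ∈ V 0 := fun w hw =>
      by_contra fun hn => hpre fun h1 h2 => hn (h1 w hw)
    have hx : x ∈ V 0 :=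
      by_contra fun hn => hpre fun h1 h2 => hn h2
    rcases h x y z hxy hyz with h' | h'
    · exact hp z h'
    · exact h' ▸ hx
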